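/- arXiv:1907.00293 — 2 statements merged into one kernel-verified Lean document; each statement's English description precedes it below -/
import Mathlib

section
/- Fix μ, θ, μ̃, θ̃, r̄, β, S_j > 0 and g, B^{(i₁)} ≠ B^{(i₂)} as in the discrete model, with λ_j = (μ(θ − S_j) − μ̃(θ̃ − S_j))/g, α₀ = r̄Δt + Δt B^{(i₂)} λ_j − βμΔt(θ/S_j − 1), α₁ = Δt λ_j (B^{(i₁)} − B^{(i₂)}), ν₀ = √Δt (B^{(i₂)} − βg/S_j), ν₁ = √Δt (B^{(i₁)} − B^{(i₂)}). Then ν₁α₀ − ν₀α₁ = 0 if and only if r̄ S_j = βμ̃(θ̃ − S_j), i.e. S_j = βμ̃θ̃/(βμ̃ + r̄). -/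
/-- Corollary 4.2: the zero expected squared tracking error condition
`ν₁α₀ − ν₀α₁ = 0` holds iff `r̄S_j = βμ̃(θ̃ − S_j)`, i.e. `S_j = βμ̃θ̃/(βμ̃ + r̄)`. -/
theorem stmt_6 (μ θ μt θt rbar β Sj g B₁ B₂ Δt : ℝ)
    (hμ : 0 < μ) (hθ : 0 < θ) (hμt : 0 < μt) (hθt : 0 < θt) (hr : 0 < rbar)
    (hβ : 0 < β) (hS : 0 < Sj) (hg : 0 < g) (hΔt : 0 < Δt) (hB : B₁ ≠ B₂)
    (lamj α₀ α₁ ν₀ ν₁ : ℝ)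
    (hlam : lamj = (μ * (θ - Sj) - μt * (θt - Sj)) / g)
    (hα₀ : α₀ = rbar * Δt + Δt * B₂ * lamj - β * μ * Δt * (θ / Sj - 1))
    (hα₁ : α₁ = Δt * lamj * (B₁ - B₂))
    (hν₀ : ν₀ = Real.sqrt Δt * (B₂ - β * g / Sj))
    (hν₁ : ν₁ = Real.sqrt Δt * (B₁ - B₂)) :
    (ν₁ * α₀ - ν₀ * α₁ = 0 ↔ rbar * Sj = β * μt * (θt - Sj)) ∧
    (ν₁ * α₀ - ν₀ * α₁ = 0 ↔ Sj = β * μt * θt / (β * μt + rbar)) := by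
  have hs : Real.sqrt Δt ≠ 0 := by positivity
  have hBne : B₁ - B₂ ≠ 0 := sub_ne_zero.mpr hB
  have hSne : Sj ≠ 0 := hS.ne'
  have hgne : g ≠ 0 := hg.ne'
  have hΔne : Δt ≠ 0 := hΔt.ne'
  have key : ν₁ * α₀ - ν₀ * α₁
      = Real.sqrt Δt * (B₁ - B₂) * Δt * (rbar * Sj - β * μt * (θt - Sj)) / Sj := by
    subst hlam hα₀ hα₁ hν₀ hν₁
    field_simp
    ring
  have h1 : ν₁ * α₀ - ν₀ * α₁ = 0 ↔ rbar * Sj = β * μt * (θt - Sj) := by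
    rw [key, div_eq_zero_iff]
    constructor
    · rintro (h | h)
      · rcases mul_eq_zero.mp h with h | h
        · rcases mul_eq_zero.mp h with h | h
          · exact absurd (mul_eq_zero.mp h) (by push_neg; exact ⟨hs, hBne⟩)
          · exact absurd h hΔne
        · linarith [sub_eq_zero.mp h]
      · exact absurd h hSne
    · intro h
      left
      rw [show rbar * Sj - β * μt * (θt - Sj) = 0 by linarith]
      ring
  have hden : β * μt + rbar ≠ 0 := by positivity
  refine ⟨h1, h1.trans ?_⟩
  rw [eq_div_iff hden]
  constructor <;> intro h <;> linarith
end

section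
/- Under the discrete-time model with two futures of distinct maturities (so B_j^{(i₁)} ≠ B_j^{(i₂)}), the optimal weight w* = −(α₀α₁ + ν₀ν₁)/(α₁² + ν₁²) in the first futures contract, together with 1 − w* in the second, minimizes the conditional expected squared tracking error E[((X_{j+1}/X_j) − β(S_{j+1}/S_j) + β − 1)² | F_j] over all weight pairs summing to 1, and the minimal value is (ν₁α₀ − ν₀α₁)²/(α₁² + ν₁²). -/
open MeasureTheory ProbabilityTheory

/-!
The tracking error is `a(w) + b(w) Z` with `Z` standard normal, so its second moment is
`a(w)² + b(w)²`, a quadratic in `w`. Lagrange's identity writes `α₁² + ν₁²` times this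
quadratic as `(ν₁α₀ − ν₀α₁)²` plus a square vanishing exactly at `w*`.
-/

open scoped NNReal

namespace ProbabilityTheory

lemma integral_sq_gaussianReal (m : ℝ) (v : ℝ≥0) :
    ∫ x, x ^ 2 ∂gaussianReal m v = m ^ 2 + v := by
  have h := variance_eq_sub (memLp_id_gaussianReal (μ := m) (v := v) 2)
  rw [variance_id_gaussianReal] at h
  simp only [Pi.pow_apply, id_eq, integral_id_gaussianReal] at h
  linarith

lemma integral_sq_const_add_mul_of_hasLaw_gaussianReal {Ω : Type*} {mΩ : MeasurableSpace Ω}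
    {P : Measure Ω} {Z : Ω → ℝ} {m : ℝ} {v : ℝ≥0} (hZ : HasLaw Z (gaussianReal m v) P)
    (a b : ℝ) : ∫ ω, (a + b * Z ω) ^ 2 ∂P = (a + b * m) ^ 2 + b ^ 2 * v := by
  have hlaw := gaussianReal_const_add (gaussianReal_const_mul hZ b) a
  have h := hlaw.integral_comp (f := fun x => x ^ 2) (by fun_prop)
  rw [integral_sq_gaussianReal] at h
  simp only [Function.comp_def] at h
  rw [h, NNReal.coe_mul, NNReal.coe_mk]
  ring

end ProbabilityTheory

lemma lagrange_identity_affine (a₀ a₁ b₀ b₁ w : ℝ) :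
    (a₁ ^ 2 + b₁ ^ 2) * ((a₀ + a₁ * w) ^ 2 + (b₀ + b₁ * w) ^ 2) =
      (b₁ * a₀ - b₀ * a₁) ^ 2 + ((a₁ ^ 2 + b₁ ^ 2) * w + (a₀ * a₁ + b₀ * b₁)) ^ 2 := by
  ring

lemma sq_add_sq_affine_at_argmin {a₀ a₁ b₀ b₁ : ℝ} (h : a₁ ^ 2 + b₁ ^ 2 ≠ 0) :
    let w := -(a₀ * a₁ + b₀ * b₁) / (a₁ ^ 2 + b₁ ^ 2)
    (a₀ + a₁ * w) ^ 2 + (b₀ + b₁ * w) ^ 2 = (b₁ * a₀ - b₀ * a₁) ^ 2 / (a₁ ^ 2 + b₁ ^ 2) := by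
  intro w
  rw [eq_div_iff h, mul_comm _ (a₁ ^ 2 + b₁ ^ 2), lagrange_identity_affine]
  simp [w, mul_div_cancel₀ _ h]

lemma div_le_sq_add_sq_affine {a₀ a₁ b₀ b₁ : ℝ} (h : 0 < a₁ ^ 2 + b₁ ^ 2) (w : ℝ) :
    (b₁ * a₀ - b₀ * a₁) ^ 2 / (a₁ ^ 2 + b₁ ^ 2) ≤ (a₀ + a₁ * w) ^ 2 + (b₀ + b₁ * w) ^ 2 := by
  rw [div_le_iff₀ h, mul_comm _ (a₁ ^ 2 + b₁ ^ 2), lagrange_identity_affine]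
  exact le_add_of_nonneg_right (sq_nonneg _)

theorem stmt_13_general {Ω : Type*} [MeasureSpace Ω] (P : Measure Ω)
    (β Sj : ℝ)
    (Z S' : Ω → ℝ) (X'divX : ℝ → Ω → ℝ)  -- portfolio return ratio as a function of w
    (hZmeas : Measurable Z) (hZ : Measure.map Z P = gaussianReal 0 1)
    (α₀ α₁ ν₀ ν₁ : ℝ) (hB : (α₁, ν₁) ≠ (0, 0))
    -- the return difference has the affine-in-Z form with coefficients affine in w
    (hdiff : ∀ (w : ℝ) (ω : Ω),
      X'divX w ω - β * (S' ω / Sj) + β - 1 = (α₀ + α₁ * w) + (ν₀ + ν₁ * w) * Z ω) :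
    let wstar : ℝ := -(α₀ * α₁ + ν₀ * ν₁) / (α₁ ^ 2 + ν₁ ^ 2)
    let F : ℝ → ℝ := fun w => ∫ ω, (X'divX w ω - β * (S' ω / Sj) + β - 1) ^ 2 ∂P
    (∀ w : ℝ, F wstar ≤ F w) ∧
      F wstar = (ν₁ * α₀ - ν₀ * α₁) ^ 2 / (α₁ ^ 2 + ν₁ ^ 2) := by
  intro wstar F
  have hZlaw : HasLaw Z (gaussianReal 0 1) P := ⟨hZmeas.aemeasurable, hZ⟩
  have hF (w : ℝ) : F w = (α₀ + α₁ * w) ^ 2 + (ν₀ + ν₁ * w) ^ 2 := by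
    simp only [F, hdiff, integral_sq_const_add_mul_of_hasLaw_gaussianReal hZlaw, mul_zero,
      add_zero, NNReal.coe_one, mul_one]
  have hpos : 0 < α₁ ^ 2 + ν₁ ^ 2 := by
    have : α₁ ≠ 0 ∨ ν₁ ≠ 0 := not_or_of_imp (by simpa [Prod.ext_iff] using hB)
    rcases this with h | h <;> positivity
  have hmin : F wstar = (ν₁ * α₀ - ν₀ * α₁) ^ 2 / (α₁ ^ 2 + ν₁ ^ 2) :=
    (hF wstar).trans (sq_add_sq_affine_at_argmin hpos.ne')
  refine ⟨fun w => ?_, hmin⟩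
  rw [hmin, hF w]
  exact div_le_sq_add_sq_affine hpos w

/-- Proposition 4.1: with two futures of distinct maturities (`B₁ ≠ B₂`) and weights
`(w, 1 − w)`, the weight `w* = −(α₀α₁ + ν₀ν₁)/(α₁² + ν₁²)` minimizes the expected
squared tracking error `E[(X_{j+1}/X_j − β S_{j+1}/S_j + β − 1)²]`, attaining
`(ν₁α₀ − ν₀α₁)²/(α₁² + ν₁²)`. -/
theorem stmt_13 {Ω : Type*} [MeasureSpace Ω] (P : Measure Ω) [IsProbabilityMeasure P]
    (β Sj : ℝ) (hS : Sj ≠ 0)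
    (Z S' : Ω → ℝ) (X'divX : ℝ → Ω → ℝ)  -- portfolio return ratio as a function of w
    (hZmeas : Measurable Z) (hZ : Measure.map Z P = gaussianReal 0 1)
    (α₀ α₁ ν₀ ν₁ : ℝ) (hB : (α₁, ν₁) ≠ (0, 0))
    -- the return difference has the affine-in-Z form with coefficients affine in w
    (hdiff : ∀ (w : ℝ) (ω : Ω),
      X'divX w ω - β * (S' ω / Sj) + β - 1 = (α₀ + α₁ * w) + (ν₀ + ν₁ * w) * Z ω) :
    let wstar : ℝ := -(α₀ * α₁ + ν₀ * ν₁) / (α₁ ^ 2 + ν₁ ^ 2)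
    let F : ℝ → ℝ := fun w => ∫ ω, (X'divX w ω - β * (S' ω / Sj) + β - 1) ^ 2 ∂P
    (∀ w : ℝ, F wstar ≤ F w) ∧
      F wstar = (ν₁ * α₀ - ν₀ * α₁) ^ 2 / (α₁ ^ 2 + ν₁ ^ 2) :=
  stmt_13_general P β Sj Z S' X'divX hZmeas hZ α₀ α₁ ν₀ ν₁ hB hdiff
end
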